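/- arXiv:2502.08276 — 3 statements merged into one kernel-verified Lean document; each statement's English description precedes it below -/
import Mathlib

section
/- Let A be a structurally balanced signed adjacency tensor with faction vector σ ∈ {−1,1}^n, k even, L = D − A with D(i,…,i) = ∑ |A(i,i₂,…,i_k)|. Then the vector σ itself satisfies L σ^{k-1} = 0; that is, σ is an H-eigenvector of L with H-eigenvalue 0. -/
/-- Contraction of an order-(m+1) tensor with a vector. -/
def tAct {n m : ℕ} (A : Fin n → (Fin m → Fin n) → ℝ) (x : Fin n → ℝ) (i : Fin n) : ℝ :=
  ∑ t : Fin m → Fin n, A i t * ∏ j, x (t j)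

/-- For a structurally balanced signed adjacency tensor with faction vector `σ` and
`k = m+1` even, the faction vector itself satisfies `L σ^{k-1} = 0`, where
`L = D − A` with absolute row sums on the diagonal of `D`. -/
theorem faction_vector_eig {n m : ℕ} (hk : Even (m + 1))
    (A L : Fin n → (Fin m → Fin n) → ℝ)
    (σ : Fin n → ℝ) (hσ : ∀ i, σ i = 1 ∨ σ i = -1)
    (hbal : ∀ i (t : Fin m → Fin n), A i t ≠ 0 →
      Real.sign (A i t) = σ i * ∏ j, σ (t j))
    (hL : ∀ i (t : Fin m → Fin n),
      L i t = (if ∀ j, t j = i then ∑ s : Fin m → Fin n, |A i s| else 0) - A i t) :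
    ∀ i, tAct L σ i = 0 := by
  intro i
  have hm : Odd m := Nat.odd_iff.mpr (by
    rcases hk with ⟨r, hr⟩
    omega)
  have key : ∀ t : Fin m → Fin n, L i t * ∏ j, σ (t j)
      = (if t = (fun _ => i) then ∑ s : Fin m → Fin n, |A i s| * σ i else 0)
        - |A i t| * σ i := by
    intro t
    rw [hL, sub_mul]
    have hcond : (∀ j, t j = i) ↔ t = (fun _ => i) :=
      ⟨fun h => funext h, fun h j => by rw [h]⟩
    congr 1
    · by_cases h : t = (fun _ => i)
      · rw [if_pos (hcond.mpr h), if_pos h, Finset.sum_mul]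
        simp only [h]
        rw [Finset.prod_const, Finset.card_univ, Fintype.card_fin]
        rcases hσ i with h1 | h1 <;> simp [h1, hm.neg_one_pow]
      · simp [hcond, h]
    · by_cases hA : A i t = 0
      · simp [hA]
      · have hs := hbal i t hA
        have habs : Real.sign (A i t) * |A i t| = A i t := by
          rcases lt_trichotomy (A i t) 0 with h1 | h1 | h1
          · rw [Real.sign_of_neg h1, abs_of_neg h1]; ring
          · exact absurd h1 hA
          · rw [Real.sign_of_pos h1, abs_of_pos h1]; ring
        have hAe : A i t = |A i t| * (σ i * ∏ j, σ (t j)) := by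
          conv_lhs => rw [← habs, hs]
          ring
        have hp : (∏ j, σ (t j)) * (∏ j, σ (t j)) = 1 := by
          rw [← Finset.prod_mul_distrib]
          apply Finset.prod_eq_one
          intro j _
          rcases hσ (t j) with h1 | h1 <;> simp [h1]
        calc A i t * ∏ j, σ (t j)
            = |A i t| * σ i * ((∏ j, σ (t j)) * (∏ j, σ (t j))) := by
              conv_lhs => rw [hAe]
              ring
          _ = |A i t| * σ i := by rw [hp, mul_one]
  unfold tAct
  rw [Finset.sum_congr rfl (fun t _ => key t), Finset.sum_sub_distrib,
    Finset.sum_ite_eq' Finset.univ (fun _ => i)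
      (fun _ => ∑ s : Fin m → Fin n, |A i s| * σ i)]
  simp
end

section
/- Let A be a Metzler tensor of order k, dimension n, with a strictly positive vector x* > 0 satisfying A (x*)^{k-1} = 0. Define V(x) = max_i (x_i / x*_i)^{k-1} on the positive orthant. Then for any x > 0 and any index m achieving the maximum, (A x^{k-1})_m ≤ 0 whenever x_j ≤ V(x)^{1/(k-1)} x*_j for all j with equality at j = m; in particular, along solutions of ẋ = A x^{k-1} in the positive orthant, V is nonincreasing. -/
/-- Key Lyapunov inequality: if `A` is a Metzler tensor with `A (x*)^{k-1} = 0` for some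
strictly positive `x*`, then for any strictly positive `x` and any index `p` maximizing
`x_i / x*_i`, one has `(A x^{k-1})_p ≤ 0`; hence `V(x) = max_i (x_i/x*_i)^{k-1}` is
nonincreasing along solutions of `ẋ = A x^{k-1}` in the positive orthant. -/
theorem metzler_max_ratio_decrease {n m : ℕ}
    (A : Fin n → (Fin m → Fin n) → ℝ)
    (hMetzler : ∀ i (t : Fin m → Fin n), ¬(∀ j, t j = i) → 0 ≤ A i t)
    (xs : Fin n → ℝ) (hxs : ∀ i, 0 < xs i)
    (heq : ∀ i, tAct A xs i = 0)
    (x : Fin n → ℝ) (hx : ∀ i, 0 < x i)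
    (p : Fin n) (hp : ∀ j, x j / xs j ≤ x p / xs p) :
    tAct A x p ≤ 0 := by
  set c : ℝ := x p / xs p with hc
  have hcpos : 0 < c := div_pos (hx p) (hxs p)
  have hxle : ∀ j, x j ≤ c * xs j := by
    intro j
    have := hp j
    calc x j = (x j / xs j) * xs j := (div_mul_cancel₀ _ (hxs j).ne').symm
    _ ≤ c * xs j := by
      exact mul_le_mul_of_nonneg_right this (hxs j).le
  have hxp : x p = c * xs p := by
    rw [hc]; exact (div_mul_cancel₀ _ (hxs p).ne').symm
  have key : tAct A x p ≤ c ^ m * tAct A xs p := by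
    unfold tAct
    rw [Finset.mul_sum]
    apply Finset.sum_le_sum
    intro t _
    by_cases hdiag : ∀ j, t j = p
    · have h1 : (∏ j, x (t j)) = c ^ m * ∏ j, xs (t j) := by
        calc (∏ j, x (t j)) = ∏ j : Fin m, (c * xs (t j)) := by
              apply Finset.prod_congr rfl; intro j _; rw [hdiag j, hxp]
        _ = c ^ m * ∏ j, xs (t j) := by
              rw [Finset.prod_mul_distrib, Finset.prod_const, Finset.card_univ,
                Fintype.card_fin]
      rw [h1]; ring_nf; exact le_refl _
    · have hA := hMetzler p t hdiag
      have h2 : (∏ j, x (t j)) ≤ c ^ m * ∏ j, xs (t j) := by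
        have := Finset.prod_le_prod (s := Finset.univ)
          (f := fun j => x (t j)) (g := fun j => c * xs (t j))
          (fun j _ => (hx (t j)).le) (fun j _ => hxle (t j))
        calc (∏ j, x (t j)) ≤ ∏ j : Fin m, (c * xs (t j)) := this
        _ = c ^ m * ∏ j, xs (t j) := by
              rw [Finset.prod_mul_distrib, Finset.prod_const, Finset.card_univ,
                Fintype.card_fin]
      calc A p t * ∏ j, x (t j) ≤ A p t * (c ^ m * ∏ j, xs (t j)) :=
            mul_le_mul_of_nonneg_left h2 hA
      _ = c ^ m * (A p t * ∏ j, xs (t j)) := by ring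
  rw [heq p, mul_zero] at key
  exact key
end

section
/- Let A be a Metzler tensor of order k, dimension n, with A (x*)^{k-1} = 0 for some x* > 0. Then for every x ≥ x* (componentwise) with x_i = x*_i for some index i, one has (A x^{k-1})_i ≥ 0. (This shows the set {x : x ≥ x*} is forward invariant for ẋ = A x^{k-1}.) -/
/-- If `A` is Metzler with `A (x*)^{k-1} = 0` for some `x* > 0`, then for every
`x ≥ x*` componentwise with `x_i = x*_i` at some index `i`, one has `(A x^{k-1})_i ≥ 0`;
this shows `{x : x ≥ x*}` is forward invariant for `ẋ = A x^{k-1}`. -/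
theorem metzler_above_equilibrium_invariant {n m : ℕ}
    (A : Fin n → (Fin m → Fin n) → ℝ)
    (hMetzler : ∀ i (t : Fin m → Fin n), ¬(∀ j, t j = i) → 0 ≤ A i t)
    (xs : Fin n → ℝ) (hxs : ∀ i, 0 < xs i)
    (heq : ∀ i, tAct A xs i = 0)
    (x : Fin n → ℝ) (hx : ∀ j, xs j ≤ x j)
    (i : Fin n) (hxi : x i = xs i) :
    0 ≤ tAct A x i := by
  have h : tAct A xs i ≤ tAct A x i := by
    apply Finset.sum_le_sum
    intro t _
    by_cases hc : ∀ j, t j = i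
    · have : (∏ j, x (t j)) = ∏ j, xs (t j) := by
        apply Finset.prod_congr rfl
        intro j _
        rw [hc j, hxi]
      rw [this]
    · apply mul_le_mul_of_nonneg_left _ (hMetzler i t hc)
      exact Finset.prod_le_prod (fun j _ => (hxs (t j)).le) (fun j _ => hx (t j))
  have := heq i
  linarith
end
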